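/- arXiv:1704.02167 — 6 statements merged into one kernel-verified Lean document; each statement's English description precedes it below -/
import Mathlib

section
/- Let A be an invertible n×n matrix and N an n×n matrix with [A,N] = UŨᵀ where U, Ũ ∈ ℝ^{n×s}. Then for any C ∈ ℝ^{n×r} and any k ≥ 0, the image under N of the extended Krylov subspace EK_k(A,C) is contained in EK_k(A,(NC,U)), where EK_k(A,C) := K_k(A,C) + K_k(A⁻¹, A⁻¹C) and K_k(A,C) is the block Krylov subspace spanned by vectors p(A)Cw with deg(p) ≤ k, w ∈ ℝ^r. -/
open Matrix Polynomial

/-- Block Krylov subspace `K_k(A,C) = span{p(A) C w : deg p ≤ k, w}`. -/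
noncomputable def blockKrylov {n : ℕ} {m : Type*} [Fintype m]
    (k : ℕ) (A : Matrix (Fin n) (Fin n) ℝ) (C : Matrix (Fin n) m ℝ) :
    Submodule ℝ (Fin n → ℝ) :=
  Submodule.span ℝ
    {v | ∃ p : Polynomial ℝ, p.natDegree ≤ k ∧ ∃ w : m → ℝ, v = (aeval A p) *ᵥ (C *ᵥ w)}

/-- Extended Krylov subspace `EK_k(A,C) = K_k(A,C) + K_k(A⁻¹, A⁻¹C)`. -/
noncomputable def extKrylov {n : ℕ} {m : Type*} [Fintype m]
    (k : ℕ) (A : Matrix (Fin n) (Fin n) ℝ) (C : Matrix (Fin n) m ℝ) :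
    Submodule ℝ (Fin n → ℝ) :=
  blockKrylov k A C ⊔ blockKrylov k A⁻¹ (A⁻¹ * C)

/-!
Write `[X, Y] = XY - YX`. For any square `B`, the Horner step `p(B) = B q(B) + p(0)` together
with `N B = B N + [N, B]` shows by induction on `k` that `N K_k(B, C) ⊆ K_k(B, D)` as soon as
the columns of `N C` and of `[N, B]` lie in the column space of `D`. For `B = A` this holds with
`D = (NC, U)`, since `[N, A] = -UŨᵀ`. For `B = A⁻¹` it holds with `D = A⁻¹(NC, U)`, since
`[N, A⁻¹] = A⁻¹[A, N]A⁻¹ = A⁻¹UŨᵀA⁻¹` and `N A⁻¹C = A⁻¹NC + [N, A⁻¹]C`.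
-/

theorem Matrix.range_mulVecLin_le_of_eq_mul {R l m o : Type*} [CommSemiring R] [Fintype m]
    [Fintype o] {M : Matrix l o R} {D : Matrix l m R} {Q : Matrix m o R} (h : M = D * Q) :
    LinearMap.range M.mulVecLin ≤ LinearMap.range D.mulVecLin := by
  rw [h, mulVecLin_mul]
  exact LinearMap.range_comp_le_range _ _

theorem Matrix.mul_nonsing_inv_sub_nonsing_inv_mul {R ι : Type*} [CommRing R] [Fintype ι]
    [DecidableEq ι] {A : Matrix ι ι R} (hA : IsUnit A.det) (N : Matrix ι ι R) :
    N * A⁻¹ - A⁻¹ * N = A⁻¹ * (A * N - N * A) * A⁻¹ := by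
  simp only [mul_sub, sub_mul, ← mul_assoc, nonsing_inv_mul _ hA, one_mul]
  simp only [mul_assoc, mul_nonsing_inv _ hA, mul_one]

section BlockKrylov

variable {n : ℕ} {m m' : Type*} [Fintype m] [Fintype m']

theorem range_mulVecLin_le_blockKrylov (k : ℕ) (B : Matrix (Fin n) (Fin n) ℝ)
    (D : Matrix (Fin n) m ℝ) :
    LinearMap.range D.mulVecLin ≤ blockKrylov k B D := by
  rintro _ ⟨w, rfl⟩
  exact Submodule.subset_span ⟨1, by simp, w, by simp⟩

theorem mulVec_mem_blockKrylov_succ {k : ℕ} {B : Matrix (Fin n) (Fin n) ℝ}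
    {C : Matrix (Fin n) m ℝ} {v : Fin n → ℝ} (hv : v ∈ blockKrylov k B C) :
    B *ᵥ v ∈ blockKrylov (k + 1) B C := by
  suffices Submodule.map B.mulVecLin (blockKrylov k B C) ≤ blockKrylov (k + 1) B C from
    this ⟨v, hv, rfl⟩
  rw [blockKrylov, Submodule.map_span_le]
  rintro _ ⟨p, hp, w, rfl⟩
  refine Submodule.subset_span ⟨X * p, ?_, w, ?_⟩
  · exact natDegree_mul_le.trans (by rw [natDegree_X]; omega)
  · rw [aeval_mul, aeval_X, mulVecLin_apply, mulVec_mulVec]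

theorem mul_aeval_eq_horner (B N : Matrix (Fin n) (Fin n) ℝ) (p : ℝ[X]) :
    N * aeval B p =
      B * (N * aeval B p.divX) + (N * B - B * N) * aeval B p.divX + p.coeff 0 • N := by
  have hp : p = X * p.divX + C (p.coeff 0) := by rw [mul_comm, divX_mul_X_add]
  conv_lhs => rw [hp, aeval_add, aeval_mul, aeval_X, aeval_C, Algebra.algebraMap_eq_smul_one]
  noncomm_ring

theorem mulVec_aeval_mulVec_mem_blockKrylov {B N : Matrix (Fin n) (Fin n) ℝ}
    {C : Matrix (Fin n) m ℝ} {D : Matrix (Fin n) m' ℝ}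
    (hC : LinearMap.range (N * C).mulVecLin ≤ LinearMap.range D.mulVecLin)
    (hB : LinearMap.range (N * B - B * N).mulVecLin ≤ LinearMap.range D.mulVecLin)
    {k : ℕ} {p : ℝ[X]} (hp : p.natDegree ≤ k) (w : m → ℝ) :
    N *ᵥ (aeval B p *ᵥ (C *ᵥ w)) ∈ blockKrylov k B D := by
  have hD (j : ℕ) := range_mulVecLin_le_blockKrylov j B D
  have hNCw (j : ℕ) : (N * C) *ᵥ w ∈ blockKrylov j B D := hD j (hC ⟨w, rfl⟩)
  induction k generalizing p with
  | zero =>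
    rw [eq_C_of_natDegree_le_zero hp, aeval_C, Algebra.algebraMap_eq_smul_one, smul_mulVec,
      one_mulVec, mulVec_smul, mulVec_mulVec]
    exact Submodule.smul_mem _ _ (hNCw 0)
  | succ k ih =>
    set x := aeval B p.divX *ᵥ (C *ᵥ w)
    have horner : N *ᵥ (aeval B p *ᵥ (C *ᵥ w)) =
        B *ᵥ (N *ᵥ x) + (N * B - B * N) *ᵥ x + p.coeff 0 • ((N * C) *ᵥ w) := by
      rw [mulVec_mulVec, mul_aeval_eq_horner]
      simp only [x, mulVec_mulVec, Matrix.add_mul, Matrix.smul_mul, Matrix.mul_assoc, add_mulVec,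
        smul_mulVec]
    rw [horner]
    refine add_mem (add_mem (mulVec_mem_blockKrylov_succ (ih ?_)) (hD _ (hB ⟨x, rfl⟩)))
      (Submodule.smul_mem _ _ (hNCw _))
    rw [natDegree_divX_eq_natDegree_tsub_one]
    omega

theorem map_mulVecLin_blockKrylov_le {B N : Matrix (Fin n) (Fin n) ℝ}
    {C : Matrix (Fin n) m ℝ} {D : Matrix (Fin n) m' ℝ}
    (hC : LinearMap.range (N * C).mulVecLin ≤ LinearMap.range D.mulVecLin)
    (hB : LinearMap.range (N * B - B * N).mulVecLin ≤ LinearMap.range D.mulVecLin) (k : ℕ) :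
    Submodule.map N.mulVecLin (blockKrylov k B C) ≤ blockKrylov k B D := by
  rw [blockKrylov, Submodule.map_span_le]
  rintro _ ⟨p, hp, w, rfl⟩
  exact mulVec_aeval_mulVec_mem_blockKrylov hC hB hp w

end BlockKrylov

/-- **Theorem.** If `A` is invertible and `[A,N] = U Ũᵀ`, then
`N · EK_k(A,C) ⊆ EK_k(A,(NC,U))`. -/
theorem mul_extKrylov_subset {n s r : ℕ}
    (A N : Matrix (Fin n) (Fin n) ℝ) (U Ut : Matrix (Fin n) (Fin s) ℝ)
    (hA : IsUnit A) (hcom : A * N - N * A = U * Utᵀ)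
    (C : Matrix (Fin n) (Fin r) ℝ) (k : ℕ) :
    Submodule.map N.mulVecLin (extKrylov k A C) ≤
      extKrylov k A (Matrix.fromCols (N * C) U) := by
  have hcom_inv : N * A⁻¹ - A⁻¹ * N = A⁻¹ * U * (Utᵀ * A⁻¹) := by
    rw [mul_nonsing_inv_sub_nonsing_inv_mul ((isUnit_iff_isUnit_det A).mp hA), hcom]
    simp only [Matrix.mul_assoc]
  rw [extKrylov, extKrylov, Submodule.map_sup]
  refine sup_le_sup (map_mulVecLin_blockKrylov_le ?_ ?_ k) (map_mulVecLin_blockKrylov_le ?_ ?_ k)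
  · exact range_mulVecLin_le_of_eq_mul (Q := fromRows 1 0) (by simp [fromCols_mul_fromRows])
  · refine range_mulVecLin_le_of_eq_mul (Q := fromRows 0 (-Utᵀ)) ?_
    rw [fromCols_mul_fromRows, ← neg_sub, hcom]
    simp
  · refine range_mulVecLin_le_of_eq_mul (Q := fromRows 1 (Utᵀ * A⁻¹ * C)) ?_
    rw [Matrix.mul_assoc, fromCols_mul_fromRows, ← Matrix.mul_assoc N,
      ← sub_add_cancel (N * A⁻¹) (A⁻¹ * N), hcom_inv]
    simp only [Matrix.mul_one, Matrix.add_mul, Matrix.mul_add, Matrix.mul_assoc, add_comm]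
  · refine range_mulVecLin_le_of_eq_mul (Q := fromRows 0 (Utᵀ * A⁻¹)) ?_
    rw [Matrix.mul_assoc, fromCols_mul_fromRows, hcom_inv]
    simp only [Matrix.mul_zero, zero_add, Matrix.mul_assoc]
end

section
/- Let A, N be n×n matrices with [A,N] = UŨᵀ and C ∈ ℝ^{n×r}. Then for every polynomial p of degree at most k and every w ∈ ℝ^r, N·p(A)·C·w = p(A)·N·C·w - ∑_{j=0}^{k} ∑_{ℓ=0}^{j-1} αⱼ Aˡ U (Ũᵀ A^{j-1-ℓ} C w), where p(x) = ∑_{j=0}^k αⱼ xʲ. Consequently N·K_k(A,C) ⊆ K_k(A,(NC,U)). -/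
open Matrix Polynomial Finset

/-! The commutator `[p(A), N]` is expanded along the powers of `A`: the sum
`∑_{ℓ<j} A^ℓ [A,N] A^{j-1-ℓ}` telescopes to `[A^j, N]`, and `[A,N] = UŨᵀ` makes each term
land in the range of `A^ℓ U` with `ℓ < j ≤ k`. Hence `N p(A) C w` is `p(A) (NC) w` minus a
combination of vectors `A^ℓ U v`, all of which lie in `K_k(A, (NC, U))`. -/

theorem pow_mul_sub_mul_pow {R : Type*} [Ring R] (a b : R) (j : ℕ) :
    a ^ j * b - b * a ^ j = ∑ ℓ ∈ range j, a ^ ℓ * (a * b - b * a) * a ^ (j - 1 - ℓ) := by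
  -- telescoping `ℓ ↦ a^ℓ b a^{j-ℓ}` from `ℓ = 0` to `ℓ = j`
  have htel := sum_range_sub (fun ℓ => a ^ ℓ * b * a ^ (j - ℓ)) j
  simp only [Nat.sub_self, pow_zero, mul_one, Nat.sub_zero, one_mul] at htel
  rw [← htel]
  refine sum_congr rfl fun ℓ hℓ => ?_
  have hℓj := mem_range.mp hℓ
  rw [show j - ℓ = (j - 1 - ℓ) + 1 by omega, show j - (ℓ + 1) = j - 1 - ℓ by omega, pow_succ,
    pow_succ']
  noncomm_ring

theorem aeval_mul_sub_mul_aeval {R S : Type*} [CommRing R] [Ring S] [Algebra R S]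
    (a b : S) {p : R[X]} {k : ℕ} (hp : p.natDegree ≤ k) :
    aeval a p * b - b * aeval a p =
      ∑ j ∈ range (k + 1), ∑ ℓ ∈ range j,
        p.coeff j • (a ^ ℓ * (a * b - b * a) * a ^ (j - 1 - ℓ)) := by
  rw [aeval_eq_sum_range' (Nat.lt_succ_of_le hp), sum_mul, mul_sum, ← sum_sub_distrib]
  refine sum_congr rfl fun j _ => ?_
  rw [smul_mul_assoc, mul_smul_comm, ← smul_sub, pow_mul_sub_mul_pow, smul_sum]

section blockKrylov

variable {n : ℕ} {k : ℕ} (A : Matrix (Fin n) (Fin n) ℝ)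

theorem aeval_mulVec_mem_blockKrylov {m : Type*} [Fintype m] (C : Matrix (Fin n) m ℝ)
    {p : ℝ[X]} (hp : p.natDegree ≤ k) (w : m → ℝ) :
    aeval A p *ᵥ (C *ᵥ w) ∈ blockKrylov k A C :=
  Submodule.subset_span ⟨p, hp, w, rfl⟩

theorem pow_mulVec_mem_blockKrylov {m : Type*} [Fintype m] (C : Matrix (Fin n) m ℝ)
    {ℓ : ℕ} (hℓ : ℓ ≤ k) (w : m → ℝ) :
    A ^ ℓ *ᵥ (C *ᵥ w) ∈ blockKrylov k A C := by
  simpa using aeval_mulVec_mem_blockKrylov A C ((natDegree_X_pow_le ℓ).trans hℓ) w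

variable {m₁ m₂ : Type*} [Fintype m₁] [Fintype m₂]
  (B₁ : Matrix (Fin n) m₁ ℝ) (B₂ : Matrix (Fin n) m₂ ℝ)

theorem blockKrylov_le_fromCols_left : blockKrylov k A B₁ ≤ blockKrylov k A (fromCols B₁ B₂) :=
  Submodule.span_mono fun _ ⟨p, hp, w, hv⟩ => ⟨p, hp, Sum.elim w 0, by simpa using hv⟩

theorem blockKrylov_le_fromCols_right : blockKrylov k A B₂ ≤ blockKrylov k A (fromCols B₁ B₂) :=
  Submodule.span_mono fun _ ⟨p, hp, w, hv⟩ => ⟨p, hp, Sum.elim 0 w, by simpa using hv⟩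

end blockKrylov

/-- If `[A,N] = U Ũᵀ`, then for any polynomial `p = ∑_{j=0}^k αⱼ xʲ` of degree at most `k`
and any `w ∈ ℝ^r`:
`N p(A) C w = p(A) N C w - ∑_{j=0}^k ∑_{ℓ=0}^{j-1} αⱼ A^ℓ U (Ũᵀ A^{j-1-ℓ} C w)`;
consequently `N · K_k(A,C) ⊆ K_k(A,(NC,U))`. -/
theorem mul_blockKrylov {n s r : ℕ}
    (A N : Matrix (Fin n) (Fin n) ℝ) (U Ut : Matrix (Fin n) (Fin s) ℝ)
    (hcom : A * N - N * A = U * Utᵀ)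
    (C : Matrix (Fin n) (Fin r) ℝ) (k : ℕ) :
    (∀ p : Polynomial ℝ, p.natDegree ≤ k → ∀ w : Fin r → ℝ,
        N *ᵥ ((aeval A p) *ᵥ (C *ᵥ w)) =
          (aeval A p) *ᵥ ((N * C) *ᵥ w) -
            ∑ j ∈ Finset.range (k + 1), ∑ ℓ ∈ Finset.range j,
              p.coeff j • ((A ^ ℓ * U) *ᵥ ((Utᵀ * A ^ (j - 1 - ℓ) * C) *ᵥ w))) ∧
      Submodule.map N.mulVecLin (blockKrylov k A C) ≤
        blockKrylov k A (Matrix.fromCols (N * C) U) := by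
  have hident : ∀ p : Polynomial ℝ, p.natDegree ≤ k → ∀ w : Fin r → ℝ,
      N *ᵥ ((aeval A p) *ᵥ (C *ᵥ w)) =
        (aeval A p) *ᵥ ((N * C) *ᵥ w) -
          ∑ j ∈ Finset.range (k + 1), ∑ ℓ ∈ Finset.range j,
            p.coeff j • ((A ^ ℓ * U) *ᵥ ((Utᵀ * A ^ (j - 1 - ℓ) * C) *ᵥ w)) := by
    intro p hp w
    have hNP : N * aeval A p = aeval A p * N - (aeval A p * N - N * aeval A p) := by abel
    rw [mulVec_mulVec, mulVec_mulVec, mulVec_mulVec, hNP, aeval_mul_sub_mul_aeval A N hp, hcom]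
    simp only [Matrix.sub_mul, sub_mulVec, Matrix.sum_mul, sum_mulVec, Matrix.smul_mul,
      smul_mulVec, mulVec_mulVec, Matrix.mul_assoc]
  refine ⟨hident, ?_⟩
  rw [blockKrylov, Submodule.map_span, Submodule.span_le]
  rintro _ ⟨_, ⟨p, hp, w, rfl⟩, rfl⟩
  rw [SetLike.mem_coe, mulVecLin_apply, hident p hp w]
  refine sub_mem (blockKrylov_le_fromCols_left A _ U (aeval_mulVec_mem_blockKrylov A _ hp w))
    (sum_mem fun j hj => sum_mem fun ℓ hℓ => Submodule.smul_mem _ _ ?_)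
  rw [← mulVec_mulVec]
  exact blockKrylov_le_fromCols_right A (N * C) U
    (pow_mulVec_mem_blockKrylov A U (by grind) _)
end

section
/- Let A = tridiag(2,-5,2) and N₁ = tridiag(3,0,-3) be n×n matrices (A with subdiagonal/superdiagonal 2 and diagonal -5; N₁ with subdiagonal 3 and superdiagonal -3). Then [A,N₁] = UŨᵀ where U = 2√3·(e₁, eₙ) and Ũ = 2√3·(e₁, -eₙ); in particular rank([A,N₁]) ≤ 2. -/
open Matrix

/-- **MIMO example commutator.** With `A = tridiag(2,-5,2)` and
`N₁ = tridiag(3,0,-3)` (subdiagonal 3, superdiagonal -3), one has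
`[A,N₁] = U Ũᵀ` with `U = 2√3·(e₁, eₙ)` and `Ũ = 2√3·(e₁, -eₙ)`;
in particular `rank([A,N₁]) ≤ 2`. -/
theorem mimo_commutator {n : ℕ} (hn : 3 ≤ n)
    (A N₁ : Matrix (Fin n) (Fin n) ℝ)
    (hA : ∀ i j : Fin n, A i j =
      if i = j then -5
      else if (i : ℕ) + 1 = (j : ℕ) ∨ (j : ℕ) + 1 = (i : ℕ) then 2 else 0)
    (hN : ∀ i j : Fin n, N₁ i j =
      if (j : ℕ) + 1 = (i : ℕ) then 3
      else if (i : ℕ) + 1 = (j : ℕ) then -3 else 0)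
    (U Ut : Matrix (Fin n) (Fin 2) ℝ)
    (hU : ∀ (i : Fin n) (j : Fin 2), U i j =
      if j = 0 then (if (i : ℕ) = 0 then 2 * Real.sqrt 3 else 0)
      else (if (i : ℕ) = n - 1 then 2 * Real.sqrt 3 else 0))
    (hUt : ∀ (i : Fin n) (j : Fin 2), Ut i j =
      if j = 0 then (if (i : ℕ) = 0 then 2 * Real.sqrt 3 else 0)
      else (if (i : ℕ) = n - 1 then -(2 * Real.sqrt 3) else 0)) :
    A * N₁ - N₁ * A = U * Utᵀ ∧ (A * N₁ - N₁ * A).rank ≤ 2 := by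
  set S : Matrix (Fin n) (Fin n) ℝ :=
    Matrix.of (fun i j => if (j:ℕ)+1 = (i:ℕ) then 1 else 0) with hS
  have hAS : A = (2:ℝ) • S + (2:ℝ) • Sᵀ - (5:ℝ) • 1 := by
    ext i j
    simp only [hA, hS, Matrix.add_apply, Matrix.sub_apply, Matrix.smul_apply,
      Matrix.one_apply, Matrix.transpose_apply, Matrix.of_apply, smul_eq_mul,
      Fin.ext_iff]
    split_ifs <;> first | omega | norm_num
  have hNS : N₁ = (3:ℝ) • S - (3:ℝ) • Sᵀ := by
    ext i j
    simp only [hN, hS, Matrix.sub_apply, Matrix.smul_apply,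
      Matrix.transpose_apply, Matrix.of_apply, smul_eq_mul]
    split_ifs <;> first | omega | norm_num
  -- entries of S * Sᵀ and Sᵀ * S
  have hSS : ∀ i j : Fin n, (S * Sᵀ) i j =
      if (i:ℕ) = (j:ℕ) ∧ (i:ℕ) ≠ 0 then 1 else 0 := by
    intro i j
    simp only [Matrix.mul_apply, Matrix.transpose_apply, hS, Matrix.of_apply]
    by_cases h : (i:ℕ) = (j:ℕ) ∧ (i:ℕ) ≠ 0
    · rw [if_pos h]
      rw [Finset.sum_eq_single (⟨(i:ℕ) - 1, by omega⟩ : Fin n)]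
      · rw [if_pos (by simp; omega), if_pos (by simp; omega)]; norm_num
      · intro k _ hk
        simp only [ne_eq, Fin.ext_iff] at hk
        split_ifs <;> first | omega | norm_num
      · intro h'; exact absurd (Finset.mem_univ _) h'
    · rw [if_neg h]
      apply Finset.sum_eq_zero
      intro k _
      split_ifs <;> first | omega | norm_num
  have hTS : ∀ i j : Fin n, (Sᵀ * S) i j =
      if (i:ℕ) = (j:ℕ) ∧ (i:ℕ) ≠ n - 1 then 1 else 0 := by
    intro i j
    simp only [Matrix.mul_apply, Matrix.transpose_apply, hS, Matrix.of_apply]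
    by_cases h : (i:ℕ) = (j:ℕ) ∧ (i:ℕ) ≠ n - 1
    · rw [if_pos h]
      have hi : (i:ℕ) < n := i.isLt
      rw [Finset.sum_eq_single (⟨(i:ℕ) + 1, by omega⟩ : Fin n)]
      · rw [if_pos (by simp), if_pos (by simp; omega)]; norm_num
      · intro k _ hk
        simp only [ne_eq, Fin.ext_iff] at hk
        split_ifs <;> first | omega | norm_num
      · intro h'; exact absurd (Finset.mem_univ _) h'
    · rw [if_neg h]
      apply Finset.sum_eq_zero
      intro k _
      have hk := k.isLt
      split_ifs <;> first | omega | norm_num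
  have hC : A * N₁ - N₁ * A = (12:ℝ) • (Sᵀ * S) - (12:ℝ) • (S * Sᵀ) := by
    rw [hAS, hNS]
    simp only [sub_mul, add_mul, mul_sub, mul_add, smul_mul_assoc, mul_smul_comm,
      smul_smul, Matrix.one_mul, Matrix.mul_one]
    module
  have h3 : Real.sqrt 3 * Real.sqrt 3 = 3 := Real.mul_self_sqrt (by norm_num)
  have hmain : A * N₁ - N₁ * A = U * Utᵀ := by
    rw [hC]
    ext i j
    have hi := i.isLt
    have hj := j.isLt
    simp only [Matrix.sub_apply, Matrix.smul_apply, Matrix.mul_apply,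
      Matrix.transpose_apply, smul_eq_mul, hSS, hTS, Fin.sum_univ_two, hU, hUt]
    norm_num
    split_ifs <;> first | omega | nlinarith [h3]
  exact ⟨hmain, by
    rw [hmain]
    calc (U * Utᵀ).rank ≤ U.rank := Matrix.rank_mul_le_left U Utᵀ
      _ ≤ Fintype.card (Fin 2) := Matrix.rank_le_card_width U
      _ = 2 := by simp⟩
end

section
/- Consider the projected generalized Sylvester equation T Z + Z Hᵀ + ∑_{i=1}^m Gᵢ Z Fᵢᵀ = E, where T = VᵀAV, H = WᵀBW, Gᵢ = VᵀNᵢV, Fᵢ = WᵀMᵢW for orthonormal-column matrices V, W. If λ is an eigenvalue of the generalized eigenproblem (∑ Fᵢ ⊗ Gᵢ) v = λ (H ⊗ I + I ⊗ T) v with eigenvector v ≠ 0 and the denominator nonzero, then λ = [xᴴ(∑ Mᵢ⊗Nᵢ)x] / [xᴴ(B⊗I + I⊗A)x] where x = (W ⊗ V)v. Consequently, if the ratio field of values R(∑Mᵢ⊗Nᵢ, B⊗I+I⊗A) lies strictly inside the open unit disk, then |λ| < 1. -/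
open Matrix Kronecker Finset

/-! The Kronecker identity `(W ⊗ V)ᵀ (M ⊗ N) (W ⊗ V) = (WᵀMW) ⊗ (VᵀNV)`, together with
`WᵀW = VᵀV = 1`, shows that the projected pencil `(∑ Fᵢ ⊗ Gᵢ, H ⊗ I + I ⊗ T)` is the compression
of the full pencil `(∑ Mᵢ ⊗ Nᵢ, B ⊗ I + I ⊗ A)` by `W ⊗ V`. Pairing the eigen-equation with `v`
therefore expresses `λ` as a Rayleigh-type quotient of the full pencil at `x = (W ⊗ V) v`, which
lies in the ratio field of values since the nonzero denominator forces `x ≠ 0`. -/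

namespace Matrix

variable {l l' n n' : Type*} [Fintype l] [Fintype l']

theorem transpose_kronecker_mul_kronecker_mul_kronecker {R : Type*} [CommSemiring R]
    (W : Matrix l n R) (V : Matrix l' n' R) (M : Matrix l l R) (N : Matrix l' l' R) :
    (W ⊗ₖ V)ᵀ * (M ⊗ₖ N) * (W ⊗ₖ V) = (Wᵀ * M * W) ⊗ₖ (Vᵀ * N * V) := by
  rw [← kroneckerMap_transpose, ← mul_kronecker_mul, ← mul_kronecker_mul]

theorem star_mulVec_dotProduct_mulVec_mulVec {R : Type*} [CommSemiring R] [StarRing R]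
    [Fintype n] (P : Matrix l l R) (Q : Matrix l n R) (v : n → R) :
    star (Q *ᵥ v) ⬝ᵥ (P *ᵥ (Q *ᵥ v)) = star v ⬝ᵥ ((Qᴴ * P * Q) *ᵥ v) := by
  rw [star_mulVec, dotProduct_mulVec, dotProduct_mulVec, dotProduct_mulVec, vecMul_vecMul,
    vecMul_vecMul, Matrix.mul_assoc]

theorem map_ofReal_transpose_mul_mul (P : Matrix l l ℝ) (Q : Matrix l n ℝ) :
    (Qᵀ * P * Q).map Complex.ofReal =
      (Q.map Complex.ofReal)ᴴ * P.map Complex.ofReal * Q.map Complex.ofReal := by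
  rw [← conjTranspose_map _ fun _ => by simp, conjTranspose_eq_transpose_of_trivial]
  exact (Matrix.map_mul (f := Complex.ofRealHom)).trans
    (congrArg (· * _) (Matrix.map_mul (f := Complex.ofRealHom)))

theorem star_mulVec_dotProduct_map_ofReal_mulVec_mulVec [Fintype n] (P : Matrix l l ℝ)
    (Q : Matrix l n ℝ) (v : n → ℂ) :
    star (Q.map Complex.ofReal *ᵥ v) ⬝ᵥ (P.map Complex.ofReal *ᵥ (Q.map Complex.ofReal *ᵥ v)) =
      star v ⬝ᵥ ((Qᵀ * P * Q).map Complex.ofReal *ᵥ v) := by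
  rw [star_mulVec_dotProduct_mulVec_mulVec, map_ofReal_transpose_mul_mul]

theorem eq_div_of_mulVec_eq_smul_mulVec [Fintype n] {K : Type*} [Field K] {P S : Matrix n n K}
    {lam : K} {v : n → K} (u : n → K) (heig : P *ᵥ v = lam • (S *ᵥ v)) (hden : u ⬝ᵥ (S *ᵥ v) ≠ 0) :
    lam = u ⬝ᵥ (P *ᵥ v) / u ⬝ᵥ (S *ᵥ v) := by
  rw [eq_div_iff hden, heig, dotProduct_smul, smul_eq_mul]

end Matrix

theorem projected_problem_eigenvalue_general {n k m : ℕ}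
    (A B : Matrix (Fin n) (Fin n) ℝ)
    (Nm Mm : Fin m → Matrix (Fin n) (Fin n) ℝ)
    (V W : Matrix (Fin n) (Fin k) ℝ)
    (hV : Vᵀ * V = 1) (hW : Wᵀ * W = 1)
    (T H : Matrix (Fin k) (Fin k) ℝ) (G F : Fin m → Matrix (Fin k) (Fin k) ℝ)
    (hT : T = Vᵀ * A * V) (hH : H = Wᵀ * B * W)
    (hG : ∀ i, G i = Vᵀ * Nm i * V) (hF : ∀ i, F i = Wᵀ * Mm i * W)
    (lam : ℂ) (v : Fin k × Fin k → ℂ)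
    (heig : ((∑ i, F i ⊗ₖ G i).map Complex.ofReal) *ᵥ v =
      lam • (((H ⊗ₖ (1 : Matrix (Fin k) (Fin k) ℝ) +
        (1 : Matrix (Fin k) (Fin k) ℝ) ⊗ₖ T).map Complex.ofReal) *ᵥ v))
    (x : Fin n × Fin n → ℂ) (hx : x = ((W ⊗ₖ V).map Complex.ofReal) *ᵥ v)
    (hden : star x ⬝ᵥ
        (((B ⊗ₖ (1 : Matrix (Fin n) (Fin n) ℝ) +
          (1 : Matrix (Fin n) (Fin n) ℝ) ⊗ₖ A).map Complex.ofReal) *ᵥ x) ≠ 0) :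
    lam =
        (star x ⬝ᵥ (((∑ i, Mm i ⊗ₖ Nm i).map Complex.ofReal) *ᵥ x)) /
          (star x ⬝ᵥ
            (((B ⊗ₖ (1 : Matrix (Fin n) (Fin n) ℝ) +
              (1 : Matrix (Fin n) (Fin n) ℝ) ⊗ₖ A).map Complex.ofReal) *ᵥ x)) ∧
      ((∀ y : Fin n × Fin n → ℂ, y ≠ 0 →
          star y ⬝ᵥ
            (((B ⊗ₖ (1 : Matrix (Fin n) (Fin n) ℝ) +
              (1 : Matrix (Fin n) (Fin n) ℝ) ⊗ₖ A).map Complex.ofReal) *ᵥ y) ≠ 0 →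
          Norm.norm
            ((star y ⬝ᵥ (((∑ i, Mm i ⊗ₖ Nm i).map Complex.ofReal) *ᵥ y)) /
              (star y ⬝ᵥ
                (((B ⊗ₖ (1 : Matrix (Fin n) (Fin n) ℝ) +
                  (1 : Matrix (Fin n) (Fin n) ℝ) ⊗ₖ A).map Complex.ofReal) *ᵥ y))) < 1) →
        Norm.norm lam < 1) := by
  have hnum : (W ⊗ₖ V)ᵀ * (∑ i, Mm i ⊗ₖ Nm i) * (W ⊗ₖ V) = ∑ i, F i ⊗ₖ G i := by
    simp only [Matrix.mul_sum, Matrix.sum_mul, transpose_kronecker_mul_kronecker_mul_kronecker,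
      hF, hG]
  have hpencil : (W ⊗ₖ V)ᵀ * (B ⊗ₖ 1 + 1 ⊗ₖ A) * (W ⊗ₖ V) = H ⊗ₖ 1 + 1 ⊗ₖ T := by
    rw [Matrix.mul_add, Matrix.add_mul, transpose_kronecker_mul_kronecker_mul_kronecker,
      transpose_kronecker_mul_kronecker_mul_kronecker, Matrix.mul_one, Matrix.mul_one, hV, hW,
      hH, hT]
  have hnum_x : star x ⬝ᵥ ((∑ i, Mm i ⊗ₖ Nm i).map Complex.ofReal *ᵥ x) =
      star v ⬝ᵥ ((∑ i, F i ⊗ₖ G i).map Complex.ofReal *ᵥ v) := by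
    rw [hx, star_mulVec_dotProduct_map_ofReal_mulVec_mulVec, hnum]
  have hden_x : star x ⬝ᵥ ((B ⊗ₖ 1 + 1 ⊗ₖ A).map Complex.ofReal *ᵥ x) =
      star v ⬝ᵥ ((H ⊗ₖ 1 + 1 ⊗ₖ T).map Complex.ofReal *ᵥ v) := by
    rw [hx, star_mulVec_dotProduct_map_ofReal_mulVec_mulVec, hpencil]
  have hlam : lam = star x ⬝ᵥ ((∑ i, Mm i ⊗ₖ Nm i).map Complex.ofReal *ᵥ x) /
      star x ⬝ᵥ ((B ⊗ₖ 1 + 1 ⊗ₖ A).map Complex.ofReal *ᵥ x) := by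
    rw [hnum_x, hden_x]
    exact eq_div_of_mulVec_eq_smul_mulVec (star v) heig (hden_x ▸ hden)
  refine ⟨hlam, fun hball => hlam ▸ hball x ?_ hden⟩
  rintro rfl
  simp at hden

/-- **Eigenvalues of the projected generalized eigenproblem.** With
`T = VᵀAV`, `H = WᵀBW`, `Gᵢ = VᵀNᵢV`, `Fᵢ = WᵀMᵢW` for `V, W` with orthonormal
columns, if `(∑ Fᵢ ⊗ Gᵢ) v = λ (H⊗I + I⊗T) v` with `v ≠ 0` and the denominator is
nonzero, then `λ = xᴴ(∑ Mᵢ⊗Nᵢ)x / xᴴ(B⊗I + I⊗A)x` with `x = (W ⊗ V) v`; hence if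
the ratio field of values `R(∑Mᵢ⊗Nᵢ, B⊗I+I⊗A)` lies strictly inside the open unit
disk, then `|λ| < 1`. -/
theorem projected_problem_eigenvalue {n k m : ℕ}
    (A B : Matrix (Fin n) (Fin n) ℝ)
    (Nm Mm : Fin m → Matrix (Fin n) (Fin n) ℝ)
    (V W : Matrix (Fin n) (Fin k) ℝ)
    (hV : Vᵀ * V = 1) (hW : Wᵀ * W = 1)
    (T H : Matrix (Fin k) (Fin k) ℝ) (G F : Fin m → Matrix (Fin k) (Fin k) ℝ)
    (hT : T = Vᵀ * A * V) (hH : H = Wᵀ * B * W)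
    (hG : ∀ i, G i = Vᵀ * Nm i * V) (hF : ∀ i, F i = Wᵀ * Mm i * W)
    (lam : ℂ) (v : Fin k × Fin k → ℂ) (hv : v ≠ 0)
    (heig : ((∑ i, F i ⊗ₖ G i).map Complex.ofReal) *ᵥ v =
      lam • (((H ⊗ₖ (1 : Matrix (Fin k) (Fin k) ℝ) +
        (1 : Matrix (Fin k) (Fin k) ℝ) ⊗ₖ T).map Complex.ofReal) *ᵥ v))
    (x : Fin n × Fin n → ℂ) (hx : x = ((W ⊗ₖ V).map Complex.ofReal) *ᵥ v)
    (hden : star x ⬝ᵥ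
        (((B ⊗ₖ (1 : Matrix (Fin n) (Fin n) ℝ) +
          (1 : Matrix (Fin n) (Fin n) ℝ) ⊗ₖ A).map Complex.ofReal) *ᵥ x) ≠ 0) :
    lam =
        (star x ⬝ᵥ (((∑ i, Mm i ⊗ₖ Nm i).map Complex.ofReal) *ᵥ x)) /
          (star x ⬝ᵥ
            (((B ⊗ₖ (1 : Matrix (Fin n) (Fin n) ℝ) +
              (1 : Matrix (Fin n) (Fin n) ℝ) ⊗ₖ A).map Complex.ofReal) *ᵥ x)) ∧
      ((∀ y : Fin n × Fin n → ℂ, y ≠ 0 →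
          star y ⬝ᵥ
            (((B ⊗ₖ (1 : Matrix (Fin n) (Fin n) ℝ) +
              (1 : Matrix (Fin n) (Fin n) ℝ) ⊗ₖ A).map Complex.ofReal) *ᵥ y) ≠ 0 →
          Norm.norm
            ((star y ⬝ᵥ (((∑ i, Mm i ⊗ₖ Nm i).map Complex.ofReal) *ᵥ y)) /
              (star y ⬝ᵥ
                (((B ⊗ₖ (1 : Matrix (Fin n) (Fin n) ℝ) +
                  (1 : Matrix (Fin n) (Fin n) ℝ) ⊗ₖ A).map Complex.ofReal) *ᵥ y))) < 1) →
        Norm.norm lam < 1) :=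
  projected_problem_eigenvalue_general A B Nm Mm V W hV hW T H G F hT hH hG hF lam v heig x hx hden
end

section
/- Under the hypotheses of the previous recursion, with additionally ‖Ȳⱼ‖ ≤ β_kʲ ‖L_k‖ ‖C‖ where β_k := ‖L_k Π‖, one has ‖Y_{j+1} - Ȳ_{j+1}‖ ≤ ‖C‖ (ε_k) [ β^{j+1}·(‖𝓛⁻¹‖/ε_k·0 omitted) + ‖Π‖‖L_k‖ ∑_{t=0}^j β^{j-t} β_k^t ] + β^{j+1}ε_k‖C‖, i.e., precisely: ‖Y_{j+1} - Ȳ_{j+1}‖ ≤ ‖C‖ε_k [ β^{j+1} + ‖Π‖‖L_k‖ ∑_{t=0}^{j} β^{j-t} β_k^t ], using ‖Y₀ - Ȳ₀‖ ≤ ε_k‖C‖. -/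
open Matrix Finset

attribute [local instance] Matrix.frobeniusNormedAddCommGroup Matrix.frobeniusNormedSpace

noncomputable instance matrixFrobeniusCLMOpNorm {n : ℕ} :
    Norm (Matrix (Fin n) (Fin n) ℝ →L[ℝ] Matrix (Fin n) (Fin n) ℝ) :=
  ContinuousLinearMap.hasOpNorm

/-! The error `eⱼ = ‖Yⱼ - Ȳⱼ‖` obeys `e_{j+1} ≤ β eⱼ + ε_k ‖Π‖ ‖Ȳⱼ‖`, obtained by splitting
`𝓛⁻¹ΠYⱼ - L_kΠȲⱼ = 𝓛⁻¹Π(Yⱼ - Ȳⱼ) + (𝓛⁻¹ - L_k)ΠȲⱼ`. Solving this linear recursive inequality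
by variation of constants, with `e₀ ≤ ε_k‖C‖` and the geometric bound `‖Ȳⱼ‖ ≤ β_kʲ‖L_k‖‖C‖`,
gives the claim. -/

theorem le_pow_mul_add_sum_of_le_mul_add {e f : ℕ → ℝ} {β : ℝ} (hβ : 0 ≤ β)
    (h : ∀ j, e (j + 1) ≤ β * e j + f j) (j : ℕ) :
    e (j + 1) ≤ β ^ (j + 1) * e 0 + ∑ t ∈ range (j + 1), β ^ (j - t) * f t := by
  induction j with
  | zero => simpa using h 0
  | succ j ih =>
    have hsum : ∑ t ∈ range (j + 2), β ^ (j + 1 - t) * f t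
        = β * ∑ t ∈ range (j + 1), β ^ (j - t) * f t + f (j + 1) := by
      rw [sum_range_succ, mul_sum, Nat.sub_self, pow_zero, one_mul]
      congr 1
      refine sum_congr rfl fun t ht => ?_
      rw [Nat.sub_add_comm (Nat.lt_succ_iff.mp (mem_range.mp ht)), pow_succ]
      ring
    calc e (j + 2) ≤ β * e (j + 1) + f (j + 1) := h (j + 1)
      _ ≤ β * (β ^ (j + 1) * e 0 + ∑ t ∈ range (j + 1), β ^ (j - t) * f t) + f (j + 1) := by
        gcongr
      _ = β ^ (j + 2) * e 0 + ∑ t ∈ range (j + 2), β ^ (j + 1 - t) * f t := by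
        rw [hsum]; ring

section

variable {𝕜 E F : Type*} [NontriviallyNormedField 𝕜] [SeminormedAddCommGroup E]
  [NormedSpace 𝕜 E] [SeminormedAddCommGroup F] [NormedSpace 𝕜 F]

theorem ContinuousLinearMap.norm_le_pow_mul_of_eq_neg_apply (T : E →L[𝕜] E) {x : ℕ → E}
    (hx : ∀ j, x (j + 1) = -T (x j)) (j : ℕ) : ‖x j‖ ≤ ‖T‖ ^ j * ‖x 0‖ :=
  le_geom (u := fun i => ‖x i‖) T.opNorm_nonneg j fun i _ => by
    rw [hx, norm_neg]
    exact T.le_opNorm (x i)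

theorem ContinuousLinearMap.norm_apply_comp_sub_apply_comp_le (A B : F →L[𝕜] E)
    (P : E →L[𝕜] F) (y z : E) :
    ‖A (P y) - B (P z)‖ ≤ ‖A.comp P‖ * ‖y - z‖ + ‖A - B‖ * ‖P‖ * ‖z‖ := by
  have hsplit : A (P y) - B (P z) = (A.comp P) (y - z) + (A - B) (P z) := by
    simp only [comp_apply, _root_.sub_apply, map_sub]
    abel
  rw [hsplit, mul_assoc]
  exact (norm_add_le _ _).trans
    (add_le_add ((A.comp P).le_opNorm _) ((A - B).le_opNorm_of_le (P.le_opNorm z)))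

end

theorem approx_neumann_refined_bound_general {n : ℕ}
    (L Pi' Linv Lk : Matrix (Fin n) (Fin n) ℝ →L[ℝ] Matrix (Fin n) (Fin n) ℝ)
    (εk : ℝ) (hεk : ‖Linv - Lk‖ ≤ εk)
    (β βk : ℝ) (hβ : β = ‖Linv.comp Pi'‖) (hβk : βk = ‖Lk.comp Pi'‖)
    (C : Matrix (Fin n) (Fin n) ℝ)
    (Y Yb : ℕ → Matrix (Fin n) (Fin n) ℝ)
    (hY0 : Y 0 = Linv C) (hYrec : ∀ j, Y (j + 1) = -Linv (Pi' (Y j)))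
    (hYb0 : Yb 0 = Lk C) (hYbrec : ∀ j, Yb (j + 1) = -Lk (Pi' (Yb j))) :
    (∀ j : ℕ, ‖Yb j‖ ≤ βk ^ j * ‖Lk‖ * ‖C‖) ∧
      ∀ j : ℕ, ‖Y (j + 1) - Yb (j + 1)‖ ≤
        ‖C‖ * εk * (β ^ (j + 1) +
          ‖Pi'‖ * ‖Lk‖ * ∑ t ∈ Finset.range (j + 1), β ^ (j - t) * βk ^ t) := by
  have hβ0 : 0 ≤ β := hβ ▸ (Linv.comp Pi').opNorm_nonneg
  have hεk0 : 0 ≤ εk := (Linv - Lk).opNorm_nonneg.trans hεk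
  have hPi0 : 0 ≤ ‖Pi'‖ := Pi'.opNorm_nonneg
  have hYb : ∀ j, ‖Yb j‖ ≤ βk ^ j * ‖Lk‖ * ‖C‖ := fun j => by
    rw [mul_assoc, hβk]
    exact ((Lk.comp Pi').norm_le_pow_mul_of_eq_neg_apply hYbrec j).trans <|
      mul_le_mul_of_nonneg_left (hYb0 ▸ Lk.le_opNorm C) (pow_nonneg (Lk.comp Pi').opNorm_nonneg j)
  refine ⟨hYb, fun j => ?_⟩
  have hinit : ‖Y 0 - Yb 0‖ ≤ εk * ‖C‖ := by
    rw [hY0, hYb0, ← _root_.sub_apply]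
    exact (Linv - Lk).le_of_opNorm_le hεk C
  have herr : ∀ i, ‖Y (i + 1) - Yb (i + 1)‖ ≤ β * ‖Y i - Yb i‖ + εk * ‖Pi'‖ * ‖Yb i‖ :=
    fun i => by
      rw [hYrec, hYbrec, neg_sub_neg, norm_sub_rev, hβ]
      exact (Linv.norm_apply_comp_sub_apply_comp_le Lk Pi' _ _).trans <| add_le_add_right
        (mul_le_mul_of_nonneg_right (mul_le_mul_of_nonneg_right hεk hPi0) (norm_nonneg _)) _
  calc ‖Y (j + 1) - Yb (j + 1)‖
      ≤ β ^ (j + 1) * ‖Y 0 - Yb 0‖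
          + ∑ t ∈ range (j + 1), β ^ (j - t) * (εk * ‖Pi'‖ * ‖Yb t‖) :=
        le_pow_mul_add_sum_of_le_mul_add (e := fun i => ‖Y i - Yb i‖) hβ0 herr j
    _ ≤ β ^ (j + 1) * (εk * ‖C‖)
          + ∑ t ∈ range (j + 1), β ^ (j - t) * (εk * ‖Pi'‖ * (βk ^ t * ‖Lk‖ * ‖C‖)) := by
        gcongr with t
        exact hYb t
    _ = ‖C‖ * εk * (β ^ (j + 1) + ‖Pi'‖ * ‖Lk‖ * ∑ t ∈ range (j + 1), β ^ (j - t) * βk ^ t) := by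
        rw [mul_add, mul_sum, mul_sum]
        congr 1
        · ring
        · exact sum_congr rfl fun t _ => by ring

/-- **Refined bound for approximate Neumann iterates.** With `‖𝓛⁻¹ - L_k‖ ≤ ε_k`,
`β = ‖𝓛⁻¹Π‖`, `β_k = ‖L_kΠ‖`, and the recursively defined iterates
`Y₀ = 𝓛⁻¹(C)`, `Y_{j+1} = -𝓛⁻¹(Π(Yⱼ))`, `Ȳ₀ = L_k(C)`, `Ȳ_{j+1} = -L_k(Π(Ȳⱼ))`,
one has (using `‖Ȳⱼ‖ ≤ β_kʲ‖L_k‖‖C‖` and `‖Y₀ - Ȳ₀‖ ≤ ε_k‖C‖`)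
`‖Y_{j+1} - Ȳ_{j+1}‖ ≤ ‖C‖ε_k [ β^{j+1} + ‖Π‖‖L_k‖ ∑_{t=0}^j β^{j-t} β_kᵗ ]`. -/
theorem approx_neumann_refined_bound {n : ℕ}
    (L Pi' Linv Lk : Matrix (Fin n) (Fin n) ℝ →L[ℝ] Matrix (Fin n) (Fin n) ℝ)
    (hinv₁ : Linv.comp L = ContinuousLinearMap.id ℝ _)
    (hinv₂ : L.comp Linv = ContinuousLinearMap.id ℝ _)
    (εk : ℝ) (hεk : ‖Linv - Lk‖ ≤ εk)
    (β βk : ℝ) (hβ : β = ‖Linv.comp Pi'‖) (hβk : βk = ‖Lk.comp Pi'‖)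
    (C : Matrix (Fin n) (Fin n) ℝ)
    (Y Yb : ℕ → Matrix (Fin n) (Fin n) ℝ)
    (hY0 : Y 0 = Linv C) (hYrec : ∀ j, Y (j + 1) = -Linv (Pi' (Y j)))
    (hYb0 : Yb 0 = Lk C) (hYbrec : ∀ j, Yb (j + 1) = -Lk (Pi' (Yb j))) :
    (∀ j : ℕ, ‖Yb j‖ ≤ βk ^ j * ‖Lk‖ * ‖C‖) ∧
      ∀ j : ℕ, ‖Y (j + 1) - Yb (j + 1)‖ ≤
        ‖C‖ * εk * (β ^ (j + 1) +
          ‖Pi'‖ * ‖Lk‖ * ∑ t ∈ Finset.range (j + 1), β ^ (j - t) * βk ^ t) :=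
  approx_neumann_refined_bound_general L Pi' Linv Lk εk hεk β βk hβ hβk C Y Yb hY0 hYrec hYb0 hYbrec
end

section
/- Let A = Q_A U_A Q_Aᵀ and B = Q_B U_B Q_Bᵀ be real Schur-type factorizations with Q_A, Q_B orthogonal. Suppose Ỹⱼ, j = 0,…,ℓ, satisfy U_A Ỹ₀ + Ỹ₀ U_Bᵀ = C̃₁C̃₂ᵀ and U_A Ỹ_{j+1} + Ỹ_{j+1} U_Bᵀ = -∑_{i=1}^m Ñᵢ Ỹⱼ M̃ᵢᵀ, where C̃₁ = Q_AᵀC₁, C̃₂ = Q_BᵀC₂, Ñᵢ = Q_AᵀNᵢQ_A, M̃ᵢ = Q_BᵀMᵢQ_B. Then X^{(ℓ)} := Q_A(∑_{j=0}^ℓ Ỹⱼ)Q_Bᵀ satisfies that its residual R^{(ℓ)} := AX^{(ℓ)} + X^{(ℓ)}Bᵀ + ∑ᵢ NᵢX^{(ℓ)}Mᵢᵀ - C₁C₂ᵀ has Frobenius norm ‖R^{(ℓ)}‖_F = ‖∑_{i=1}^m Ñᵢ Ỹ_ℓ M̃ᵢᵀ‖_F. -/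
open Matrix Finset

attribute [local instance] Matrix.frobeniusNormedAddCommGroup

lemma frob_sq_eq_trace {n r : ℕ} (M : Matrix (Fin n) (Fin r) ℝ) :
    (∑ i, ∑ j, ‖M i j‖ ^ (2:ℝ)) = (Mᵀ * M).trace := by
  rw [Matrix.trace]
  simp only [Matrix.diag_apply, Matrix.mul_apply, Matrix.transpose_apply]
  rw [Finset.sum_comm]
  congr 1; ext j; congr 1; ext i
  rw [Real.norm_eq_abs, Real.rpow_two, sq_abs, sq]

lemma frob_orth_inv {n : ℕ} (P Q : Matrix (Fin n) (Fin n) ℝ)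
    (hP : Pᵀ * P = 1) (hQ : Qᵀ * Q = 1)
    (T : Matrix (Fin n) (Fin n) ℝ) :
    ‖P * T * Qᵀ‖ = ‖T‖ := by
  rw [Matrix.frobenius_norm_def, Matrix.frobenius_norm_def]
  congr 1
  rw [frob_sq_eq_trace, frob_sq_eq_trace]
  have h : (P * T * Qᵀ)ᵀ * (P * T * Qᵀ) = Q * (Tᵀ * T) * Qᵀ := by
    simp only [Matrix.transpose_mul, Matrix.transpose_transpose, Matrix.mul_assoc]
    rw [← Matrix.mul_assoc Pᵀ P, hP, Matrix.one_mul]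
  rw [h, Matrix.trace_mul_cycle, ← Matrix.mul_assoc, hQ, Matrix.one_mul]

/-- **Residual norm of the truncated Neumann series in Schur-transformed form.**
With `A = Q_A U_A Q_Aᵀ`, `B = Q_B U_B Q_Bᵀ` (`Q_A, Q_B` orthogonal), transformed
data `C̃₁ = Q_AᵀC₁`, `C̃₂ = Q_BᵀC₂`, `Ñᵢ = Q_AᵀNᵢQ_A`, `M̃ᵢ = Q_BᵀMᵢQ_B`, and `Ỹⱼ`
solving the triangular Sylvester chain, the approximation
`X^{(ℓ)} = Q_A(∑ⱼ Ỹⱼ)Q_Bᵀ` has residual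
`R^{(ℓ)} = AX^{(ℓ)} + X^{(ℓ)}Bᵀ + ∑ᵢ NᵢX^{(ℓ)}Mᵢᵀ - C₁C₂ᵀ` with Frobenius norm
`‖R^{(ℓ)}‖_F = ‖∑ᵢ Ñᵢ Ỹ_ℓ M̃ᵢᵀ‖_F`. -/
theorem truncated_neumann_residual_norm {n r m : ℕ} (ℓ : ℕ)
    (A B QA QB UA UB : Matrix (Fin n) (Fin n) ℝ)
    (Nm Mm : Fin m → Matrix (Fin n) (Fin n) ℝ)
    (C₁ C₂ : Matrix (Fin n) (Fin r) ℝ)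
    (hQA : QAᵀ * QA = 1) (hQA' : QA * QAᵀ = 1)
    (hQB : QBᵀ * QB = 1) (hQB' : QB * QBᵀ = 1)
    (hA : A = QA * UA * QAᵀ) (hB : B = QB * UB * QBᵀ)
    (Ct₁ : Matrix (Fin n) (Fin r) ℝ) (hCt₁ : Ct₁ = QAᵀ * C₁)
    (Ct₂ : Matrix (Fin n) (Fin r) ℝ) (hCt₂ : Ct₂ = QBᵀ * C₂)
    (Nt Mt : Fin m → Matrix (Fin n) (Fin n) ℝ)
    (hNt : ∀ i, Nt i = QAᵀ * Nm i * QA) (hMt : ∀ i, Mt i = QBᵀ * Mm i * QB)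
    (Yt : ℕ → Matrix (Fin n) (Fin n) ℝ)
    (hY0 : UA * Yt 0 + Yt 0 * UBᵀ = Ct₁ * Ct₂ᵀ)
    (hYrec : ∀ j < ℓ, UA * Yt (j + 1) + Yt (j + 1) * UBᵀ =
      -∑ i, Nt i * Yt j * (Mt i)ᵀ)
    (X : Matrix (Fin n) (Fin n) ℝ)
    (hX : X = QA * (∑ j ∈ Finset.range (ℓ + 1), Yt j) * QBᵀ) :
    ‖A * X + X * Bᵀ + ∑ i, Nm i * X * (Mm i)ᵀ - C₁ * C₂ᵀ‖ =
      ‖∑ i, Nt i * Yt ℓ * (Mt i)ᵀ‖ := by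
  have c1 : ∀ (k : ℕ) (M : Matrix (Fin n) (Fin k) ℝ), QAᵀ * (QA * M) = M := fun k M => by
    rw [← Matrix.mul_assoc, hQA, Matrix.one_mul]
  have c2 : ∀ (k : ℕ) (M : Matrix (Fin n) (Fin k) ℝ), QA * (QAᵀ * M) = M := fun k M => by
    rw [← Matrix.mul_assoc, hQA', Matrix.one_mul]
  have c3 : ∀ (k : ℕ) (M : Matrix (Fin n) (Fin k) ℝ), QBᵀ * (QB * M) = M := fun k M => by
    rw [← Matrix.mul_assoc, hQB, Matrix.one_mul]
  have c4 : ∀ (k : ℕ) (M : Matrix (Fin n) (Fin k) ℝ), QB * (QBᵀ * M) = M := fun k M => by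
    rw [← Matrix.mul_assoc, hQB', Matrix.one_mul]
  set S : Matrix (Fin n) (Fin n) ℝ := ∑ j ∈ Finset.range (ℓ + 1), Yt j with hS
  have hR : A * X + X * Bᵀ + ∑ i, Nm i * X * (Mm i)ᵀ - C₁ * C₂ᵀ
      = QA * (UA * S + S * UBᵀ + (∑ i, Nt i * S * (Mt i)ᵀ) - Ct₁ * Ct₂ᵀ) * QBᵀ := by
    subst hA hB hX hCt₁ hCt₂
    simp only [hNt, hMt, Matrix.transpose_mul, Matrix.transpose_transpose,
      Matrix.mul_add, Matrix.add_mul, Matrix.mul_sub, Matrix.sub_mul,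
      Matrix.mul_sum, Matrix.sum_mul, Matrix.mul_assoc, c1, c2, c3, c4,
      hQA', hQB', Matrix.mul_one, Matrix.one_mul]
  have h3 : (∑ i, Nt i * S * (Mt i)ᵀ)
      = ∑ j ∈ Finset.range (ℓ + 1), ∑ i, Nt i * Yt j * (Mt i)ᵀ := by
    rw [Finset.sum_comm]
    apply Finset.sum_congr rfl
    intro i _
    rw [Matrix.mul_sum, Matrix.sum_mul]
  have h1 : UA * S + S * UBᵀ
      = ∑ j ∈ Finset.range (ℓ + 1), (UA * Yt j + Yt j * UBᵀ) := by
    rw [hS, Matrix.mul_sum, Matrix.sum_mul, ← Finset.sum_add_distrib]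
  have h2 : ∑ j ∈ Finset.range ℓ, (UA * Yt (j + 1) + Yt (j + 1) * UBᵀ)
      = -∑ j ∈ Finset.range ℓ, ∑ i, Nt i * Yt j * (Mt i)ᵀ := by
    rw [← Finset.sum_neg_distrib]
    exact Finset.sum_congr rfl fun j hj => hYrec j (Finset.mem_range.mp hj)
  have key : UA * S + S * UBᵀ + (∑ i, Nt i * S * (Mt i)ᵀ) - Ct₁ * Ct₂ᵀ
      = ∑ i, Nt i * Yt ℓ * (Mt i)ᵀ := by
    rw [h1, h3, Finset.sum_range_succ', h2, hY0, Finset.sum_range_succ]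
    abel
  rw [hR, key, frob_orth_inv QA QB hQA hQB]
end
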